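/- arXiv:1902.05757 — 3 statements merged into one kernel-verified Lean document; each statement's English description precedes it below -/
import Mathlib

section
/- Let r, L ∈ ℕ with r ≥ 2, let G be a group, and let A be a finite subset of G such that the growth function n ↦ |A^n| of product sets is super-polynomial (i.e., not bounded above by any polynomial in n). Then A is not an asymptotic (r,L)-approximate group. -/
/-!
If `A ^ (k r)` is covered by `L` translates of `A ^ k` for all large `k`, then iterating from a
fixed `h` gives `|A ^ (h r ^ j)| ≤ L ^ j |A ^ h|`. Since `L ≤ r ^ L`, this is at most
`(r ^ j) ^ L |A ^ h|`, and as `n ↦ |A ^ n|` is monotone, taking `r ^ j` to be the least power of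
`r` above `n` bounds `|A ^ n|` by the polynomial `|A ^ h| (r n) ^ L`.
-/

open Pointwise

theorem le_mul_pow_of_le_pow_mul {f : ℕ → ℕ} (hf : MonotoneOn f (Set.Ici 1)) {r L h M : ℕ}
    (hr : 1 < r) (hh : 1 ≤ h) (hgeom : ∀ j, f (h * r ^ j) ≤ L ^ j * M) {n : ℕ} (hn : n ≠ 0) :
    f n ≤ M * (r * n) ^ L := by
  set j := Nat.log r n + 1
  have hn_lt : n < h * r ^ j :=
    (Nat.lt_pow_succ_log_self hr n).trans_le (Nat.le_mul_of_pos_left _ hh)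
  have hrj : r ^ j ≤ r * n := by
    rw [pow_succ']
    exact Nat.mul_le_mul_left r (Nat.pow_log_le_self r hn)
  have hn_pos : 1 ≤ n := Nat.one_le_iff_ne_zero.2 hn
  have hL : L ≤ r ^ L := (Nat.lt_pow_self hr).le
  calc f n ≤ f (h * r ^ j) := hf hn_pos (hn_pos.trans hn_lt.le) hn_lt.le
    _ ≤ L ^ j * M := hgeom j
    _ ≤ (r ^ j) ^ L * M := by
        rw [← pow_mul, mul_comm j, pow_mul]
        exact Nat.mul_le_mul_right M (Nat.pow_le_pow_left hL j)
    _ ≤ M * (r * n) ^ L := by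
        rw [mul_comm]
        exact Nat.mul_le_mul_left M (Nat.pow_le_pow_left hrj L)

namespace Finset

variable {G : Type*} [Group G] [DecidableEq G]

theorem card_pow_mul_pow_le {A : Finset G} {r L h : ℕ} (hr : r ≠ 0)
    (hcover : ∀ k ≥ h, ∃ X : Finset G, X.card ≤ L ∧ A ^ (k * r) ⊆ X * A ^ k) (j : ℕ) :
    (A ^ (h * r ^ j)).card ≤ L ^ j * (A ^ h).card := by
  induction j with
  | zero => simp
  | succ j ih =>
    obtain ⟨X, hX, hsub⟩ := hcover (h * r ^ j) (Nat.le_mul_of_pos_right h (by positivity))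
    calc (A ^ (h * r ^ (j + 1))).card = (A ^ (h * r ^ j * r)).card := by rw [pow_succ, mul_assoc]
      _ ≤ (X * A ^ (h * r ^ j)).card := card_le_card hsub
      _ ≤ X.card * (A ^ (h * r ^ j)).card := card_mul_le
      _ ≤ L * (L ^ j * (A ^ h).card) := Nat.mul_le_mul hX ih
      _ = L ^ (j + 1) * (A ^ h).card := by ring

end Finset

open Polynomial in
/-- if the growth function `n ↦ |Aⁿ|` of a finite subset `A` of a group is
super-polynomial, then `A` is not an asymptotic `(r, L)`-approximate group (for `r ≥ 2`). -/
theorem superpolynomial_growth_not_asymptotic_approximate {G : Type*} [Group G]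
    [DecidableEq G] (r L : ℕ) (hr : 2 ≤ r) (A : Finset G)
    (hgrow : ∀ p : Polynomial ℕ, {n : ℕ | p.eval n < (A ^ n).card}.Infinite) :
    ¬ ∃ h0 : ℕ, ∀ h ≥ h0, ∃ X : Finset G, X.card ≤ L ∧ A ^ (h * r) ⊆ X * A ^ h := by
  rintro ⟨h0, hcover⟩
  have hgeom := Finset.card_pow_mul_pow_le (A := A) (h := h0 + 1) (by omega)
    (fun k hk ↦ hcover k (by omega))
  have hmono : MonotoneOn (fun n ↦ (A ^ n).card) (Set.Ici 1) :=
    fun m hm _ _ hmn ↦ Finset.card_pow_mono (Nat.one_le_iff_ne_zero.1 hm) hmn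
  obtain ⟨n, hlarge, hn⟩ := (hgrow (C (A ^ (h0 + 1)).card * (C r * X) ^ L)).exists_gt 0
  simp only [Set.mem_ofPred_eq, eval_mul, eval_pow, eval_C, eval_X] at hlarge
  exact (le_mul_pow_of_le_pow_mul hmono hr (by omega) hgeom hn.ne').not_gt hlarge
end

section
/- Let r, L ∈ ℕ with r, L ≥ 2, let G be a group and A a finite subset of G which is an asymptotic (r,L)-approximate group. Then the growth function f(n) = |A^n| is bounded above by a polynomial: there exist constants M and d such that f(h) ≤ M·h^d for all h ≥ 1. -/
open Pointwise Finset

/-!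
Write `f h = |A ^ h|`. The covering `A ^ (h r) ⊆ X_h A ^ h` gives `f (h r) ≤ L f h` for large `h`,
so iterating from a fixed `m` gives `f (m r ^ k) ≤ L ^ k f m`. As `f` is monotone on `h ≥ 1`
and `r ≥ 2`, `f h ≤ f (m r ^ k)` for `k = ⌈log₂ h⌉`, and `L ^ log₂ h = h ^ log₂ L` is polynomial in `h`.
-/

lemma Finset.card_le_mul_card_of_subset_mul {M : Type*} [Mul M] [DecidableEq M]
    {A B X : Finset M} {L : ℕ} (hX : #X ≤ L) (hAXB : A ⊆ X * B) : #A ≤ L * #B :=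
  calc #A ≤ #(X * B) := card_le_card hAXB
    _ ≤ #X * #B := card_mul_le
    _ ≤ L * #B := Nat.mul_le_mul_right _ hX

namespace Nat

lemma apply_mul_pow_le_of_apply_mul_le {f : ℕ → ℕ} {r L m₀ m : ℕ} (hr : 0 < r)
    (hf : ∀ n ≥ m₀, f (n * r) ≤ L * f n) (hm : m₀ ≤ m) (k : ℕ) :
    f (m * r ^ k) ≤ L ^ k * f m := by
  induction k with
  | zero => simp
  | succ k ih =>
    have hmk : m₀ ≤ m * r ^ k := hm.trans (Nat.le_mul_of_pos_right _ (pow_pos hr k))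
    calc f (m * r ^ (k + 1)) = f (m * r ^ k * r) := by rw [pow_succ, Nat.mul_assoc]
      _ ≤ L * f (m * r ^ k) := hf _ hmk
      _ ≤ L * (L ^ k * f m) := Nat.mul_le_mul_left _ ih
      _ = L ^ (k + 1) * f m := by ring

lemma pow_clog_two_le {L h : ℕ} (hL : 0 < L) (hh : h ≠ 0) :
    L ^ clog 2 h ≤ L * h ^ clog 2 L := by
  have hclog : clog 2 h ≤ log 2 h + 1 :=
    (clog_le_iff_le_pow one_lt_two).2 (lt_pow_succ_log_self one_lt_two h).le
  calc L ^ clog 2 h ≤ L ^ (log 2 h + 1) := Nat.pow_le_pow_right hL hclog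
    _ = L * L ^ log 2 h := by ring
    _ ≤ L * (2 ^ clog 2 L) ^ log 2 h :=
        Nat.mul_le_mul_left _ (Nat.pow_le_pow_left (le_pow_clog one_lt_two L) _)
    _ = L * (2 ^ log 2 h) ^ clog 2 L := by rw [← pow_mul, ← pow_mul, Nat.mul_comm (clog 2 L)]
    _ ≤ L * h ^ clog 2 L :=
        Nat.mul_le_mul_left _ (Nat.pow_le_pow_left (pow_log_le_self 2 hh) _)

theorem exists_le_mul_pow_of_apply_mul_le {f : ℕ → ℕ} {r L m₀ : ℕ}
    (hf : MonotoneOn f (Set.Ici 1)) (hr : 2 ≤ r) (hL : 0 < L)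
    (hdil : ∀ n ≥ m₀, f (n * r) ≤ L * f n) :
    ∃ M d : ℕ, ∀ h ≥ 1, f h ≤ M * h ^ d := by
  set m := max m₀ 1
  refine ⟨L * f m, clog 2 L, fun h hh => ?_⟩
  have hcover : h ≤ m * r ^ clog 2 h :=
    calc h ≤ 2 ^ clog 2 h := le_pow_clog one_lt_two h
      _ ≤ r ^ clog 2 h := Nat.pow_le_pow_left hr _
      _ ≤ m * r ^ clog 2 h := Nat.le_mul_of_pos_left _ (le_max_right m₀ 1)
  calc f h ≤ f (m * r ^ clog 2 h) := hf hh (Set.mem_Ici.2 (hh.trans hcover)) hcover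
    _ ≤ L ^ clog 2 h * f m :=
        apply_mul_pow_le_of_apply_mul_le (by omega) hdil (le_max_left _ _) _
    _ ≤ L * h ^ clog 2 L * f m := Nat.mul_le_mul_right _ (pow_clog_two_le hL (by omega))
    _ = L * f m * h ^ clog 2 L := by ring

end Nat

/-- if a finite subset `A` of a group is an asymptotic `(r, L)`-approximate
group (with `r, L ≥ 2`), then its growth function `h ↦ |A^h|` is polynomially bounded. -/
theorem asymptotic_approximate_polynomial_growth {G : Type*} [Group G] [DecidableEq G]
    (r L : ℕ) (hr : 2 ≤ r) (hL : 2 ≤ L) (A : Finset G)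
    (happrox : ∃ h0 : ℕ, ∀ h ≥ h0, ∃ X : Finset G, X.card ≤ L ∧ A ^ (h * r) ⊆ X * A ^ h) :
    ∃ (M : ℝ) (d : ℕ), ∀ h : ℕ, 1 ≤ h → ((A ^ h).card : ℝ) ≤ M * (h : ℝ) ^ d := by
  obtain ⟨h₀, hcover⟩ := happrox
  have hdil : ∀ n ≥ h₀, #(A ^ (n * r)) ≤ L * #(A ^ n) := fun n hn => by
    obtain ⟨X, hXL, hsub⟩ := hcover n hn
    exact card_le_mul_card_of_subset_mul hXL hsub
  have hmono : MonotoneOn (fun n => #(A ^ n)) (Set.Ici 1) := fun m hm _ _ hmn =>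
    card_pow_mono (Nat.one_le_iff_ne_zero.1 hm) hmn
  obtain ⟨M, d, hbound⟩ := Nat.exists_le_mul_pow_of_apply_mul_le hmono hr (by omega) hdil
  exact ⟨M, d, fun h hh => mod_cast hbound h hh⟩
end

section
/- Let A be the union of k unbounded linear sets P(f_i, e_{i,1},…,e_{i,l_i}) = f_i + E_i in ℤ^{k+l} with standard basis vectors as above, where E_i is the nonnegative span of e_{i,1},…,e_{i,l_i}. Then for every h ∈ ℕ, the h-fold sumset satisfies hA ⊇ \overline{hF} + E, where F = {f_1,…,f_k}, \overline{hF} is the set of sums n_1 f_1+⋯+n_k f_k with n_i ∈ ℤ_{>0} and n_1+⋯+n_k = h, and E = E_1+⋯+E_k; moreover (rh)A ⊆ rhF + E. -/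
open Pointwise

/-- The `n`-fold sumset `n·A = {a₁ + ⋯ + aₙ : aᵢ ∈ A}` (with `0·A = {0}`). -/
def nsmulSet {G : Type*} [AddCommMonoid G] : ℕ → Set G → Set G
  | 0, _ => {0}
  | n + 1, A => A + nsmulSet n A

/-- The union `A = ⋃ᵢ (fᵢ + Eᵢ)` of `k` unbounded linear sets in `ℤ^{k+l}`, where
`fᵢ, e_{i,j}` form the standard basis and `Eᵢ` is the nonnegative span of the `e_{i,j}`. -/
def semilinearUnion (k : ℕ) (l : Fin k → ℕ) :
    Set ((Fin k ⊕ ((i : Fin k) × Fin (l i))) → ℤ) :=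
  ⋃ i : Fin k, {v | ∃ n : Fin (l i) → ℕ,
    v = Pi.single (Sum.inl i) 1 + ∑ j, (n j : ℤ) • Pi.single (Sum.inr ⟨i, j⟩) (1 : ℤ)}

/-- `F = {f₁, …, f_k}`, the set of the first `k` standard basis vectors. -/
def Fset (k : ℕ) (l : Fin k → ℕ) : Set ((Fin k ⊕ ((i : Fin k) × Fin (l i))) → ℤ) :=
  {v | ∃ i : Fin k, v = Pi.single (Sum.inl i) 1}

/-- `E = E₁ + ⋯ + E_k`, the nonnegative span of all the `e_{i,j}`. -/
def Eset (k : ℕ) (l : Fin k → ℕ) : Set ((Fin k ⊕ ((i : Fin k) × Fin (l i))) → ℤ) :=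
  {v | ∃ s : ((i : Fin k) × Fin (l i)) → ℕ,
    v = ∑ p, (s p : ℤ) • Pi.single (Sum.inr p) (1 : ℤ)}

/-- `\overline{hF}`: sums `n₁f₁ + ⋯ + n_k f_k` with all `nᵢ > 0` and `∑ nᵢ = h`. -/
def hFbar (k : ℕ) (l : Fin k → ℕ) (h : ℕ) :
    Set ((Fin k ⊕ ((i : Fin k) × Fin (l i))) → ℤ) :=
  {v | ∃ n : Fin k → ℕ, (∀ i, 0 < n i) ∧ (∑ i, n i) = h ∧
    v = ∑ i, (n i : ℤ) • Pi.single (Sum.inl i) (1 : ℤ)}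

lemma nsmulSet_add {G : Type*} [AddCommMonoid G] (m n : ℕ) (A : Set G) :
    nsmulSet (m + n) A = nsmulSet m A + nsmulSet n A := by
  induction m with
  | zero =>
    rw [Nat.zero_add]
    show nsmulSet n A = {0} + nsmulSet n A
    simp [Set.singleton_add]
  | succ m ih =>
    rw [Nat.succ_add]
    show A + nsmulSet (m + n) A = (A + nsmulSet m A) + nsmulSet n A
    rw [ih, add_assoc]

lemma mem_nsmulSet_sum {G : Type*} [AddCommMonoid G] {A : Set G} {ι : Type*}
    (s : Finset ι) (n : ι → ℕ) (x : ι → G)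
    (hx : ∀ i ∈ s, x i ∈ nsmulSet (n i) A) :
    (∑ i ∈ s, x i) ∈ nsmulSet (∑ i ∈ s, n i) A := by
  induction s using Finset.cons_induction with
  | empty => simp [nsmulSet]
  | cons a s ha ih =>
    rw [Finset.sum_cons, Finset.sum_cons, nsmulSet_add]
    exact Set.add_mem_add (hx a (Finset.mem_cons_self a s))
      (ih fun i hi => hx i (Finset.mem_cons_of_mem hi))

lemma zero_mem_Eset (k : ℕ) (l : Fin k → ℕ) : (0 : _) ∈ Eset k l :=
  ⟨0, by simp⟩

lemma add_mem_Eset {k : ℕ} {l : Fin k → ℕ} {a b} (ha : a ∈ Eset k l) (hb : b ∈ Eset k l) :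
    a + b ∈ Eset k l := by
  obtain ⟨s, rfl⟩ := ha
  obtain ⟨t, rfl⟩ := hb
  refine ⟨s + t, ?_⟩
  rw [← Finset.sum_add_distrib]
  refine Finset.sum_congr rfl fun p _ => ?_
  push_cast [Pi.add_apply, add_smul]
  ring

lemma single_mem_Eset {k : ℕ} {l : Fin k → ℕ} (p : (i : Fin k) × Fin (l i)) (m : ℕ) :
    (m : ℤ) • Pi.single (Sum.inr p) (1 : ℤ) ∈ Eset k l := by
  refine ⟨Pi.single p m, ?_⟩
  rw [Fintype.sum_eq_single p fun q hq => by simp [Pi.single_eq_of_ne hq]]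
  simp

lemma Ei_mem_Eset {k : ℕ} {l : Fin k → ℕ} (i : Fin k) (n : Fin (l i) → ℕ) :
    (∑ j, (n j : ℤ) • Pi.single (Sum.inr ⟨i, j⟩) (1 : ℤ)) ∈ Eset k l :=
  Finset.sum_induction _ (· ∈ Eset k l) (fun _ _ => add_mem_Eset) (zero_mem_Eset k l)
    (fun j _ => single_mem_Eset ⟨i, j⟩ (n j))

lemma f_mem_A {k : ℕ} {l : Fin k → ℕ} (i : Fin k) :
    Pi.single (Sum.inl i) 1 ∈ semilinearUnion k l :=
  Set.mem_iUnion.2 ⟨i, 0, by simp⟩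

lemma smul_f_add_mem {k : ℕ} {l : Fin k → ℕ} (i : Fin k) (s : Fin (l i) → ℕ) :
    ∀ n : ℕ, 0 < n →
      ((n : ℤ) • Pi.single (Sum.inl i) 1 +
        ∑ j, (s j : ℤ) • Pi.single (Sum.inr ⟨i, j⟩) (1 : ℤ))
        ∈ nsmulSet n (semilinearUnion k l) := by
  intro n
  induction n with
  | zero => omega
  | succ m ih =>
    intro _
    rcases Nat.eq_zero_or_pos m with hm | hm
    · subst hm
      show _ ∈ semilinearUnion k l + nsmulSet 0 (semilinearUnion k l)
      refine Set.mem_add.2 ⟨_, Set.mem_iUnion.2 ⟨i, s, rfl⟩, 0, rfl, ?_⟩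
      push_cast
      rw [one_smul, add_zero]
    · show _ ∈ semilinearUnion k l + nsmulSet m (semilinearUnion k l)
      refine Set.mem_add.2 ⟨_, f_mem_A i, _, ih hm, ?_⟩
      push_cast
      rw [add_smul, one_smul]
      abel

lemma A_subset_sum {k : ℕ} {l : Fin k → ℕ} (m : ℕ) :
    nsmulSet m (semilinearUnion k l) ⊆ nsmulSet m (Fset k l) + Eset k l := by
  induction m with
  | zero =>
    intro x hx
    rcases hx with rfl
    exact Set.mem_add.2 ⟨0, rfl, 0, zero_mem_Eset k l, by simp⟩
  | succ m ih =>
    intro x hx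
    obtain ⟨a, ha, y, hy, rfl⟩ := Set.mem_add.1 hx
    obtain ⟨i, n, rfl⟩ := Set.mem_iUnion.1 ha
    obtain ⟨yF, hyF, yE, hyE, rfl⟩ := Set.mem_add.1 (ih hy)
    refine Set.mem_add.2 ⟨Pi.single (Sum.inl i) 1 + yF,
      Set.mem_add.2 ⟨_, ⟨i, rfl⟩, _, hyF, rfl⟩,
      (∑ j, (n j : ℤ) • Pi.single (Sum.inr ⟨i, j⟩) (1 : ℤ)) + yE,
      add_mem_Eset (Ei_mem_Eset i n) hyE, by abel⟩

/-- `hA ⊇ \overline{hF} + E` for every `h`, and `(rh)A ⊆ rhF + E`. -/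
theorem semilinear_sumset_sandwich (k : ℕ) (l : Fin k → ℕ) :
    (∀ h : ℕ, hFbar k l h + Eset k l ⊆ nsmulSet h (semilinearUnion k l)) ∧
    (∀ r h : ℕ, nsmulSet (r * h) (semilinearUnion k l) ⊆
      nsmulSet (r * h) (Fset k l) + Eset k l) := by
  constructor
  · intro h v hv
    obtain ⟨a, ⟨n, hpos, hsum, rfl⟩, b, ⟨sv, rfl⟩, rfl⟩ := Set.mem_add.1 hv
    rw [← Finset.univ_sigma_univ, Finset.sum_sigma, ← Finset.sum_add_distrib]
    rw [← hsum]
    exact mem_nsmulSet_sum Finset.univ n _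
      (fun i _ => smul_f_add_mem i (fun j => sv ⟨i, j⟩) (n i) (hpos i))
  · intro r h
    exact A_subset_sum (r * h)
end
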